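/- arXiv:2210.17107 — 6 statements merged into one kernel-verified Lean document; each statement's English description precedes it below -/
import Mathlib

section
/- Let X be a real Hilbert space and F : X → X* satisfy (F1)–(F5). Let δ : X → [δ_min, δ_max] be any damping-parameter function with 0 < δ_min ≤ δ_max < 2α_{F'}/L. Then, for any initial guess u⁰ ∈ X, the damped Newton iterates u^{n+1} = u^n − δ(u^n) F'(u^n)^{-1} F(u^n) converge strongly in X to the unique solution u* ∈ X of F(u) = 0. -/
/-!
`F = H'` is the gradient of a strongly convex potential `H` whose gradient is `L`-Lipschitz.
Coercivity of `F'(u)` makes the Newton direction `d = F'(u)⁻¹ F(u)` a descent direction,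
`F(u) d ≥ α ‖d‖²`, so the descent lemma `H(u + p) ≤ H(u) + F(u) p + L/2 ‖p‖²` shows that every
damped step lowers `H` by at least `δ_min (α - L δ_max / 2) ‖d‖²`. As `H` is bounded below, `dⁿ → 0`,
hence `F(uⁿ) = F'(uⁿ) dⁿ → 0`. Strong monotonicity gives `ν ‖u - v‖ ≤ ‖F u - F v‖`, so `(uⁿ)` is
Cauchy, and its limit is the unique zero of the continuous map `F`.
-/

open Filter Set Topology

theorem sub_le_sub_of_hasDerivAt_le {f g f' g' : ℝ → ℝ} {a b : ℝ} (hab : a ≤ b)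
    (hf : ∀ t, HasDerivAt f (f' t) t) (hg : ∀ t, HasDerivAt g (g' t) t)
    (hle : ∀ t ∈ Ioo a b, f' t ≤ g' t) : f b - f a ≤ g b - g a := by
  have hmono : MonotoneOn (g - f) (Icc a b) := by
    refine monotoneOn_of_hasDerivWithinAt_nonneg (convex_Icc a b)
      (fun t _ => ((hg t).sub (hf t)).continuousAt.continuousWithinAt)
      (fun t _ => ((hg t).sub (hf t)).hasDerivWithinAt) fun t ht => ?_
    rw [interior_Icc] at ht
    exact sub_nonneg.2 (hle t ht)
  have := hmono (left_mem_Icc.2 hab) (right_mem_Icc.2 hab) hab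
  simp only [Pi.sub_apply] at this
  linarith

theorem tendsto_zero_of_le_sub_succ {a b : ℕ → ℝ} (hb : ∀ n, 0 ≤ b n)
    (hab : ∀ n, b n ≤ a n - a (n + 1)) (ha : BddBelow (range a)) :
    Tendsto b atTop (𝓝 0) := by
  have hanti : Antitone a := antitone_nat_of_succ_le fun n => by linarith [hb n, hab n]
  have hlim := tendsto_atTop_ciInf hanti ha
  have hgap : Tendsto (fun n => a n - a (n + 1)) atTop (𝓝 0) := by
    simpa using hlim.sub (hlim.comp (tendsto_add_atTop_nat 1))
  exact squeeze_zero hb hab hgap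

theorem AntilipschitzWith.exists_tendsto_of_tendsto_comp {α β : Type*} [PseudoEMetricSpace α]
    [CompleteSpace α] [PseudoEMetricSpace β] [T2Space β] {K : NNReal} {f : α → β}
    (hf : AntilipschitzWith K f) (hfc : UniformContinuous f) {u : ℕ → α} {y : β}
    (hu : Tendsto (f ∘ u) atTop (𝓝 y)) : ∃ x, f x = y ∧ Tendsto u atTop (𝓝 x) := by
  have hcauchy : CauchySeq u := (hf.isUniformInducing hfc).cauchy_map_iff.1 <| by
    rw [map_map]; exact hu.cauchySeq
  obtain ⟨x, hx⟩ := cauchySeq_tendsto_of_complete hcauchy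
  exact ⟨x, tendsto_nhds_unique ((hfc.continuous.tendsto x).comp hx) hu, hx⟩

theorem ContinuousLinearMap.norm_le_of_forall_apply_le {X : Type*} [SeminormedAddCommGroup X]
    [NormedSpace ℝ X] {φ : StrongDual ℝ X} {C : ℝ} (hC : 0 ≤ C) (h : ∀ w, φ w ≤ C * ‖w‖) :
    ‖φ‖ ≤ C := by
  refine φ.opNorm_le_bound hC fun w => abs_le.2 ⟨neg_le.2 ?_, h w⟩
  simpa using h (-w)

section Potential

variable {X : Type*} [NormedAddCommGroup X] [NormedSpace ℝ X] {F : X → StrongDual ℝ X}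
  {H : X → ℝ}

theorem lipschitzWith_of_forall_abs_apply_sub_le {L : ℝ} (hL : 0 ≤ L)
    (hLip : ∀ u v w : X, |F u w - F v w| ≤ L * ‖u - v‖ * ‖w‖) :
    LipschitzWith (Real.toNNReal L) F := by
  refine LipschitzWith.of_dist_le_mul fun u v => ?_
  rw [dist_eq_norm, dist_eq_norm, Real.coe_toNNReal L hL]
  refine (F u - F v).opNorm_le_bound (by positivity) fun w => ?_
  simpa using hLip u v w

theorem antilipschitzWith_of_strongMono {ν : ℝ} (hν : 0 < ν)
    (hMono : ∀ u v : X, ν * ‖u - v‖ ^ 2 ≤ F u (u - v) - F v (u - v)) :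
    AntilipschitzWith (Real.toNNReal ν)⁻¹ F := by
  refine AntilipschitzWith.of_le_mul_dist fun u v => ?_
  rw [dist_eq_norm, dist_eq_norm, NNReal.coe_inv, Real.coe_toNNReal ν hν.le,
    ← div_eq_inv_mul, le_div_iff₀' hν]
  rcases (norm_nonneg (u - v)).eq_or_lt with h | h
  · rw [← h, mul_zero]; exact norm_nonneg _
  refine le_of_mul_le_mul_right ?_ h
  calc ν * ‖u - v‖ * ‖u - v‖ = ν * ‖u - v‖ ^ 2 := by ring
    _ ≤ (F u - F v) (u - v) := hMono u v
    _ ≤ ‖F u - F v‖ * ‖u - v‖ := (le_abs_self _).trans ((F u - F v).le_opNorm _)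

variable (hH : ∀ u v : X, HasDerivAt (fun t : ℝ => H (u + t • v)) (F u v) 0)
include hH

theorem hasDerivAt_potential_line (u v : X) (t : ℝ) :
    HasDerivAt (fun s : ℝ => H (u + s • v)) (F (u + t • v) v) t := by
  have h0 : HasDerivAt (fun s : ℝ => H (u + t • v + s • v)) (F (u + t • v) v) (t - t) := by
    rw [sub_self]; exact hH _ _
  refine (h0.comp_sub_const t t).congr_of_eventuallyEq (.of_forall fun s => ?_)
  simp only [add_assoc, ← add_smul, add_sub_cancel]

theorem potential_add_le {L : ℝ} (hLip : ∀ u v w : X, |F u w - F v w| ≤ L * ‖u - v‖ * ‖w‖)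
    (a p : X) : H (a + p) ≤ H a + F a p + L / 2 * ‖p‖ ^ 2 := by
  have key := sub_le_sub_of_hasDerivAt_le zero_le_one (hasDerivAt_potential_line hH a p)
    (fun t => ((hasDerivAt_id t).mul_const (F a p)).add
      ((hasDerivAt_pow 2 t).mul_const (L / 2 * ‖p‖ ^ 2))) fun t ht => by
    have hdist : ‖a + t • p - a‖ = t * ‖p‖ := by
      rw [add_sub_cancel_left, norm_smul, Real.norm_of_nonneg ht.1.le]
    have := (le_abs_self _).trans (hLip (a + t • p) a p)
    rw [hdist] at this
    nlinarith
  simp only [one_smul, zero_smul, add_zero, id_eq, Pi.add_apply, one_mul, one_pow, zero_mul,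
    ne_eq, OfNat.ofNat_ne_zero, not_false_eq_true, zero_pow, sub_zero] at key
  linarith

theorem le_potential_add {ν : ℝ}
    (hMono : ∀ u v : X, ν * ‖u - v‖ ^ 2 ≤ F u (u - v) - F v (u - v)) (a p : X) :
    H a + F a p + ν / 2 * ‖p‖ ^ 2 ≤ H (a + p) := by
  have key := sub_le_sub_of_hasDerivAt_le zero_le_one
    (fun t => ((hasDerivAt_id t).mul_const (F a p)).add
      ((hasDerivAt_pow 2 t).mul_const (ν / 2 * ‖p‖ ^ 2)))
    (hasDerivAt_potential_line hH a p) fun t ht => by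
    have := hMono (a + t • p) a
    rw [add_sub_cancel_left, norm_smul, Real.norm_of_nonneg ht.1.le, map_smul, map_smul,
      smul_eq_mul, smul_eq_mul] at this
    nlinarith [ht.1]
  simp only [one_smul, zero_smul, add_zero, id_eq, Pi.add_apply, one_mul, one_pow, zero_mul,
    ne_eq, OfNat.ofNat_ne_zero, not_false_eq_true, zero_pow, sub_zero] at key
  linarith

theorem bddBelow_range_potential {ν : ℝ} (hν : 0 < ν)
    (hMono : ∀ u v : X, ν * ‖u - v‖ ^ 2 ≤ F u (u - v) - F v (u - v)) : BddBelow (range H) := by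
  refine ⟨H 0 - ‖F 0‖ ^ 2 / (2 * ν), forall_mem_range.2 fun p => ?_⟩
  have hquad := le_potential_add hH hMono 0 p
  rw [zero_add] at hquad
  have hF0 : -(‖F 0‖ * ‖p‖) ≤ F 0 p := neg_le.2 <| by
    simpa using (neg_le_abs (F 0 p)).trans ((F 0).le_opNorm p)
  have hsq : 0 ≤ (ν * ‖p‖ - ‖F 0‖) ^ 2 / (2 * ν) := by positivity
  have hexpand : (ν * ‖p‖ - ‖F 0‖) ^ 2 / (2 * ν) =
      ν / 2 * ‖p‖ ^ 2 - ‖F 0‖ * ‖p‖ + ‖F 0‖ ^ 2 / (2 * ν) := by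
    field_simp; ring
  linarith

theorem potential_sub_smul_add_le {L α δ δmin δmax : ℝ} (hL : 0 ≤ L)
    (hLip : ∀ u v w : X, |F u w - F v w| ≤ L * ‖u - v‖ * ‖w‖) (hδmin : 0 ≤ δmin)
    (hδ : δ ∈ Icc δmin δmax) (hδmax : L * δmax ≤ 2 * α) {a d : X} (hα : α * ‖d‖ ^ 2 ≤ F a d) :
    H (a - δ • d) + δmin * (α - L * δmax / 2) * ‖d‖ ^ 2 ≤ H a := by
  have hδ0 : 0 ≤ δ := hδmin.trans hδ.1
  have hrate : δmin * (α - L * δmax / 2) ≤ δ * (α - L * δ / 2) :=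
    mul_le_mul hδ.1 (by nlinarith [hδ.2]) (by linarith) hδ0
  have hstep : H (a - δ • d) ≤ H a - δ * (α - L * δ / 2) * ‖d‖ ^ 2 :=
    calc H (a - δ • d) ≤ H a + F a (-(δ • d)) + L / 2 * ‖-(δ • d)‖ ^ 2 := by
          simpa only [sub_eq_add_neg] using potential_add_le hH hLip a (-(δ • d))
      _ = H a - δ * F a d + L / 2 * δ ^ 2 * ‖d‖ ^ 2 := by
          rw [map_neg, map_smul, smul_eq_mul, norm_neg, norm_smul, Real.norm_of_nonneg hδ0]
          ring
      _ ≤ H a - δ * (α * ‖d‖ ^ 2) + L / 2 * δ ^ 2 * ‖d‖ ^ 2 := by gcongr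
      _ = H a - δ * (α - L * δ / 2) * ‖d‖ ^ 2 := by ring
  nlinarith [sq_nonneg ‖d‖]

end Potential

theorem dampedNewton_converges_general
    {X : Type*} [NormedAddCommGroup X] [InnerProductSpace ℝ X] [CompleteSpace X]
    (F : X → StrongDual ℝ X) (F' : X → X ≃L[ℝ] StrongDual ℝ X)
    (H : X → ℝ) (L ν αF' βF' : ℝ)
    (hL : 0 < L) (hν : 0 < ν) (hβF' : 0 < βF')
    -- (F1) Lipschitz continuity
    (hLip : ∀ u v w : X, |F u w - F v w| ≤ L * ‖u - v‖ * ‖w‖)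
    -- (F2) strong monotonicity
    (hMono : ∀ u v : X, ν * ‖u - v‖ ^ 2 ≤ F u (u - v) - F v (u - v))
    -- (F3) Gateaux differentiability with uniformly coercive and bounded derivative
    (hcoercive : ∀ u v : X, αF' * ‖v‖ ^ 2 ≤ F' u v v)
    (hbounded : ∀ u v w : X, F' u v w ≤ βF' * ‖v‖ * ‖w‖)
    -- (F5) F is a potential operator with potential H
    (hH : ∀ u v : X, HasDerivAt (fun t : ℝ => H (u + t • v)) (F u v) 0)
    -- damping strategy
    (δ : X → ℝ) (δmin δmax : ℝ)
    (hδmin : 0 < δmin) (hδmax : δmax < 2 * αF' / L)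
    (hδ : ∀ u : X, δ u ∈ Set.Icc δmin δmax)
    -- damped Newton iterates (u 0 is an arbitrary initial guess)
    (u : ℕ → X)
    (hiter : ∀ n : ℕ, u (n + 1) = u n - δ (u n) • (F' (u n)).symm (F (u n))) :
    ∃ ustar : X, (∀ v : X, F ustar v = 0) ∧
      (∀ w : X, (∀ v : X, F w v = 0) → w = ustar) ∧
      Filter.Tendsto u Filter.atTop (nhds ustar) := by
  set d : ℕ → X := fun n => (F' (u n)).symm (F (u n))
  have hFd : ∀ n, F' (u n) (d n) = F (u n) := fun n => (F' (u n)).apply_symm_apply _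
  have hδmax' : L * δmax < 2 * αF' := by
    rw [lt_div_iff₀ hL] at hδmax; linarith
  set c := δmin * (αF' - L * δmax / 2)
  have hc : 0 < c := mul_pos hδmin (by linarith)
  have hdescent : ∀ n, c * ‖d n‖ ^ 2 ≤ H (u n) - H (u (n + 1)) := fun n => by
    rw [le_sub_iff_add_le', hiter n]
    exact potential_sub_smul_add_le hH hL.le hLip hδmin.le (hδ (u n)) hδmax'.le
      (by simpa only [hFd n] using hcoercive (u n) (d n))
  have hdsq : Tendsto (fun n => c * ‖d n‖ ^ 2) atTop (𝓝 0) :=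
    tendsto_zero_of_le_sub_succ (fun n => by positivity) hdescent
      ((bddBelow_range_potential hH hν hMono).mono (range_comp_subset_range u H))
  have hd : Tendsto (fun n => ‖d n‖) atTop (𝓝 0) := by
    simpa [hc.ne', Real.sqrt_sq] using (hdsq.div_const c).sqrt
  have hFu : Tendsto (F ∘ u) atTop (𝓝 0) := by
    refine tendsto_zero_iff_norm_tendsto_zero.2 (squeeze_zero (fun n => norm_nonneg _)
      (fun n => ?_) (by simpa using hd.const_mul βF'))
    rw [Function.comp_apply, ← hFd n]
    exact ContinuousLinearMap.norm_le_of_forall_apply_le (by positivity) (hbounded (u n) (d n))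
  have hanti := antilipschitzWith_of_strongMono hν hMono
  obtain ⟨ustar, hzero, hlim⟩ := hanti.exists_tendsto_of_tendsto_comp
    (lipschitzWith_of_forall_abs_apply_sub_le hL.le hLip).uniformContinuous hFu
  refine ⟨ustar, fun v => by rw [hzero]; rfl, fun w hw => ?_, hlim⟩
  exact hanti.injective (ContinuousLinearMap.ext fun v => by rw [hw, hzero]; rfl)

/-- Under (F1)–(F5), the damped Newton method with step sizes
`δ(uⁿ) ∈ [δ_min, δ_max] ⊆ (0, 2α_{F'}/L)` converges, for any initial guess,
strongly to the unique solution `u⋆` of `F(u) = 0`. -/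
theorem dampedNewton_converges
    {X : Type*} [NormedAddCommGroup X] [InnerProductSpace ℝ X] [CompleteSpace X]
    (F : X → StrongDual ℝ X) (F' : X → X ≃L[ℝ] StrongDual ℝ X)
    (G H : X → ℝ) (L ν αF' βF' : ℝ)
    (hL : 0 < L) (hν : 0 < ν) (hαF' : 0 < αF') (hβF' : 0 < βF')
    -- (F1) Lipschitz continuity
    (hLip : ∀ u v w : X, |F u w - F v w| ≤ L * ‖u - v‖ * ‖w‖)
    -- (F2) strong monotonicity
    (hMono : ∀ u v : X, ν * ‖u - v‖ ^ 2 ≤ F u (u - v) - F v (u - v))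
    -- (F3) Gateaux differentiability with uniformly coercive and bounded derivative
    (hGateaux : ∀ u v : X, HasDerivAt (fun t : ℝ => F (u + t • v)) (F' u v) 0)
    (hcoercive : ∀ u v : X, αF' * ‖v‖ ^ 2 ≤ F' u v v)
    (hbounded : ∀ u v w : X, F' u v w ≤ βF' * ‖v‖ * ‖w‖)
    -- (F4) G' (u) = F'(u)u, with G' weakly continuous
    (hG : ∀ u v : X, HasDerivAt (fun t : ℝ => G (u + t • v)) (F' u u v) 0)
    (hGweak : ∀ v : X, Continuous fun u : X => F' u u v)
    -- (F5) F is a potential operator with potential H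
    (hH : ∀ u v : X, HasDerivAt (fun t : ℝ => H (u + t • v)) (F u v) 0)
    -- damping strategy
    (δ : X → ℝ) (δmin δmax : ℝ)
    (hδmin : 0 < δmin) (hδminmax : δmin ≤ δmax) (hδmax : δmax < 2 * αF' / L)
    (hδ : ∀ u : X, δ u ∈ Set.Icc δmin δmax)
    -- damped Newton iterates (u 0 is an arbitrary initial guess)
    (u : ℕ → X)
    (hiter : ∀ n : ℕ, u (n + 1) = u n - δ (u n) • (F' (u n)).symm (F (u n))) :
    ∃ ustar : X, (∀ v : X, F ustar v = 0) ∧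
      (∀ w : X, (∀ v : X, F w v = 0) → w = ustar) ∧
      Filter.Tendsto u Filter.atTop (nhds ustar) :=
  dampedNewton_converges_general F F' H L ν αF' βF' hL hν hβF' hLip hMono hcoercive hbounded hH δ
    δmin δmax hδmin hδmax hδ u hiter
end

section
/- Let X be a real Hilbert space, F : X → X* Lipschitz continuous with constant L > 0 and Gateaux differentiable with ⟨F'(u)v, v⟩ ≥ α_{F'}‖v‖_X² for all u, v ∈ X, and let H : X → ℝ be Gateaux differentiable with H' = F. If u ∈ X, δ > 0, and u⁺ = u − δ F'(u)^{-1} F(u), then H(u) − H(u⁺) ≥ (α_{F'}/δ − L/2) ‖u − u⁺‖_X². -/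
/-!
Along the segment `t ↦ u + t • d` the derivative of `H` is `F (u + t • d) d`, which differs from
`F u d` by at most `L t ‖d‖²`; integrating gives the descent bound
`H (u + d) ≤ H u + F u d + L / 2 * ‖d‖²`. For the damped Newton direction `d = -δ (F' u)⁻¹ F u`,
coercivity of `F' u` gives `F u d ≤ -(α / δ) ‖d‖²`.
-/

section Descent

variable {E : Type*} [NormedAddCommGroup E] [NormedSpace ℝ E] {F : E → StrongDual ℝ E} {H : E → ℝ}

theorem hasDerivAt_line_of_gateaux
    (hH : ∀ u v : E, HasDerivAt (fun t : ℝ => H (u + t • v)) (F u v) 0) (u d : E) (t : ℝ) :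
    HasDerivAt (fun s : ℝ => H (u + s • d)) (F (u + t • d) d) t := by
  have h := HasDerivAt.comp_sub_const t t (by rw [sub_self]; exact hH (u + t • d) d)
  refine h.congr_of_eventuallyEq (Filter.Eventually.of_forall fun s => ?_)
  simp only [add_assoc, ← add_smul, add_sub_cancel]

theorem potential_add_le_of_lipschitz
    (hH : ∀ u v : E, HasDerivAt (fun t : ℝ => H (u + t • v)) (F u v) 0) {L : ℝ}
    (hLip : ∀ u v w : E, |F u w - F v w| ≤ L * ‖u - v‖ * ‖w‖) (u d : E) :
    H (u + d) ≤ H u + F u d + L / 2 * ‖d‖ ^ 2 := by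
  set φ : ℝ → ℝ := fun t => H (u + t • d) - F u d * t - L * ‖d‖ ^ 2 * t ^ 2 / 2
  have hφ : ∀ t : ℝ, HasDerivAt φ (F (u + t • d) d - F u d - L * ‖d‖ ^ 2 * t) t := fun t => by
    have h := (((hasDerivAt_line_of_gateaux hH u d t).sub ((hasDerivAt_id t).const_mul (F u d))).sub
      (((hasDerivAt_pow 2 t).const_mul (L * ‖d‖ ^ 2)).div_const 2))
    refine h.congr_deriv ?_
    norm_num
    ring
  have hφ_nonpos : ∀ t ∈ interior (Set.Icc (0 : ℝ) 1),
      F (u + t • d) d - F u d - L * ‖d‖ ^ 2 * t ≤ 0 := by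
    intro t ht
    rw [interior_Icc] at ht
    have hdiff := (abs_le.mp (hLip (u + t • d) u d)).2
    rw [add_sub_cancel_left, norm_smul, Real.norm_eq_abs, abs_of_pos ht.1] at hdiff
    linarith
  have hanti : AntitoneOn φ (Set.Icc 0 1) :=
    antitoneOn_of_hasDerivWithinAt_nonpos (convex_Icc 0 1)
      (fun t _ => (hφ t).continuousAt.continuousWithinAt)
      (fun t _ => (hφ t).hasDerivWithinAt) hφ_nonpos
  have h10 : φ 1 ≤ φ 0 := hanti (by simp) (by simp) zero_le_one
  simp only [φ, zero_smul, add_zero, one_smul, mul_one, mul_zero, one_pow] at h10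
  linarith

end Descent

theorem le_apply_smul_symm_of_coercive {X : Type*} [NormedAddCommGroup X] [NormedSpace ℝ X]
    (A : X ≃L[ℝ] StrongDual ℝ X) {α : ℝ} (hA : ∀ v : X, α * ‖v‖ ^ 2 ≤ A v v)
    (f : StrongDual ℝ X) {δ : ℝ} (hδ : 0 < δ) :
    α / δ * ‖δ • A.symm f‖ ^ 2 ≤ f (δ • A.symm f) := by
  have hcoer := hA (A.symm f)
  rw [A.apply_symm_apply] at hcoer
  calc α / δ * ‖δ • A.symm f‖ ^ 2 = δ * (α * ‖A.symm f‖ ^ 2) := by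
        rw [norm_smul, Real.norm_eq_abs, abs_of_pos hδ]
        field_simp
    _ ≤ δ * f (A.symm f) := mul_le_mul_of_nonneg_left hcoer hδ.le
    _ = f (δ • A.symm f) := by rw [map_smul, smul_eq_mul]

theorem dampedNewton_energy_decay_general
    {X : Type*} [NormedAddCommGroup X] [InnerProductSpace ℝ X]
    (F : X → StrongDual ℝ X) (F' : X → X ≃L[ℝ] StrongDual ℝ X)
    (H : X → ℝ) (L αF' : ℝ)
    -- Lipschitz continuity
    (hLip : ∀ u v w : X, |F u w - F v w| ≤ L * ‖u - v‖ * ‖w‖)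
    -- Gateaux differentiability and uniform coercivity of the derivative
    (hcoercive : ∀ u v : X, αF' * ‖v‖ ^ 2 ≤ F' u v v)
    -- H is a Gateaux differentiable potential of F
    (hH : ∀ u v : X, HasDerivAt (fun t : ℝ => H (u + t • v)) (F u v) 0)
    (u uplus : X) (δ : ℝ) (hδ : 0 < δ)
    (huplus : uplus = u - δ • (F' u).symm (F u)) :
    (αF' / δ - L / 2) * ‖u - uplus‖ ^ 2 ≤ H u - H uplus := by
  set d := δ • (F' u).symm (F u)
  have hdescent := potential_add_le_of_lipschitz hH hLip u (-d)
  have hnewton := le_apply_smul_symm_of_coercive (F' u) (hcoercive u) (F u) hδ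
  rw [← sub_eq_add_neg, map_neg, norm_neg] at hdescent
  rw [huplus, sub_sub_cancel]
  linarith

/-- One-step energy decay of the damped Newton method:
`H(u) − H(u⁺) ≥ (α_{F'}/δ − L/2)‖u − u⁺‖²` for `u⁺ = u − δ F'(u)⁻¹ F(u)`. -/
theorem dampedNewton_energy_decay
    {X : Type*} [NormedAddCommGroup X] [InnerProductSpace ℝ X] [CompleteSpace X]
    (F : X → StrongDual ℝ X) (F' : X → X ≃L[ℝ] StrongDual ℝ X)
    (H : X → ℝ) (L αF' : ℝ) (hL : 0 < L) (hαF' : 0 < αF')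
    -- Lipschitz continuity
    (hLip : ∀ u v w : X, |F u w - F v w| ≤ L * ‖u - v‖ * ‖w‖)
    -- Gateaux differentiability and uniform coercivity of the derivative
    (hGateaux : ∀ u v : X, HasDerivAt (fun t : ℝ => F (u + t • v)) (F' u v) 0)
    (hcoercive : ∀ u v : X, αF' * ‖v‖ ^ 2 ≤ F' u v v)
    -- H is a Gateaux differentiable potential of F
    (hH : ∀ u v : X, HasDerivAt (fun t : ℝ => H (u + t • v)) (F u v) 0)
    (u uplus : X) (δ : ℝ) (hδ : 0 < δ)
    (huplus : uplus = u - δ • (F' u).symm (F u)) :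
    (αF' / δ - L / 2) * ‖u - uplus‖ ^ 2 ≤ H u - H uplus :=
  dampedNewton_energy_decay_general F F' H L αF' hLip hcoercive hH u uplus δ hδ huplus
end

section
/- Let X be a real Hilbert space, F : X → X* Lipschitz continuous with constant L > 0 and Gateaux differentiable with ⟨F'(u)v, v⟩ ≥ α_{F'}‖v‖_X² for a constant α_{F'} > 0 independent of u, where α_{F'}/L ≤ 1, and let H : X → ℝ be Gateaux differentiable with H' = F. Fix θ ∈ (0, 1/2]. Then for every u ∈ X, the acceptance criterion of the adaptive damped Newton method holds with step-size δ = α_{F'}/L: setting u⁺ = u − δ F'(u)^{-1} F(u), one has H(u) − H(u⁺) ≥ (L/2)‖u − u⁺‖_X² ≥ θ min{α_{F'}, L} ‖u − u⁺‖_X². In particular, the repeat-loop of the adaptive algorithm (which successively shrinks δ from 1 by a factor σ ∈ (0,1), capped below by α_{F'}/L) terminates after finitely many reductions. -/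
/-!
Along the damped Newton direction `ρ = F'(u)⁻¹ F(u)` one has `⟨F(u), ρ⟩ = ⟨F'(u)ρ, ρ⟩ ≥ α‖ρ‖²`,
and by Lipschitz continuity `⟨F(u - tρ), ρ⟩ ≥ (α - L t)‖ρ‖²`. Since `t ↦ H(u - tρ)` has derivative
`-⟨F(u - tρ), ρ⟩`, integrating gives `H(u) - H(u - δρ) ≥ (α δ - L δ² / 2)‖ρ‖²`, which for
`δ = α / L` equals `(L / 2)‖u - u⁺‖²`. The loop stops once `σ ^ k < α / L`, when the cap takes over.
-/

open Set

theorem hasDerivAt_comp_add_smul_of_forall_hasDerivAt_zero {E G : Type*} [AddCommGroup E]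
    [Module ℝ E] [NormedAddCommGroup G] [NormedSpace ℝ G] {f : E → G} {f' : E → G} {v : E}
    (hf : ∀ x, HasDerivAt (fun s : ℝ => f (x + s • v)) (f' x) 0) (u : E) (t : ℝ) :
    HasDerivAt (fun s : ℝ => f (u + s • v)) (f' (u + t • v)) t := by
  have hshift := HasDerivAt.comp_sub_const t t ((sub_self t).symm ▸ hf (u + t • v))
  convert hshift using 3 with s
  module

theorem le_add_mul_add_sq_of_hasDerivAt_le {g g' : ℝ → ℝ} {a b δ : ℝ} (hδ : 0 ≤ δ)
    (hg : ∀ t, HasDerivAt g (g' t) t) (hbound : ∀ t ∈ Ioo 0 δ, g' t ≤ a + b * t) :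
    g δ ≤ g 0 + a * δ + b / 2 * δ ^ 2 := by
  set φ : ℝ → ℝ := fun t => g t - a * t - b / 2 * t ^ 2
  have hφ : ∀ t, HasDerivAt φ (g' t - a - b * t) t := fun t => by
    refine (((hg t).sub ((hasDerivAt_id' t).const_mul a)).sub
      ((hasDerivAt_pow 2 t).const_mul (b / 2))).congr_deriv ?_
    push_cast
    ring
  have hφdiff : Differentiable ℝ φ := fun t => (hφ t).differentiableAt
  have hanti : AntitoneOn φ (Icc 0 δ) := by
    refine antitoneOn_of_deriv_nonpos (convex_Icc 0 δ) hφdiff.continuous.continuousOn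
      hφdiff.differentiableOn fun t ht => ?_
    rw [interior_Icc] at ht
    rw [(hφ t).deriv]
    linarith [hbound t ht]
  have hφδ := hanti (left_mem_Icc.mpr hδ) (right_mem_Icc.mpr hδ) hδ
  simp only [φ] at hφδ
  linarith

theorem mul_sq_norm_le_potential_sub {X : Type*} [NormedAddCommGroup X] [NormedSpace ℝ X]
    {F : X → StrongDual ℝ X} {H : X → ℝ} {L a δ : ℝ} {u ρ : X}
    (hLip : ∀ u v w : X, |F u w - F v w| ≤ L * ‖u - v‖ * ‖w‖)
    (hH : ∀ u v : X, HasDerivAt (fun t : ℝ => H (u + t • v)) (F u v) 0)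
    (hdescent : a * ‖ρ‖ ^ 2 ≤ F u ρ) (hδ : 0 ≤ δ) :
    (a * δ - L / 2 * δ ^ 2) * ‖ρ‖ ^ 2 ≤ H u - H (u - δ • ρ) := by
  have hbound : ∀ t ∈ Ioo 0 δ,
      F (u + t • -ρ) (-ρ) ≤ -(a * ‖ρ‖ ^ 2) + L * ‖ρ‖ ^ 2 * t := fun t ht => by
    have hdist : ‖u + t • -ρ - u‖ = t * ‖ρ‖ := by
      rw [add_sub_cancel_left, norm_smul, norm_neg, Real.norm_of_nonneg ht.1.le]
    have hLipt := (abs_le.mp (hLip (u + t • -ρ) u ρ)).1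
    rw [hdist] at hLipt
    rw [map_neg]
    linarith
  have hline := le_add_mul_add_sq_of_hasDerivAt_le (g' := fun t => F (u + t • -ρ) (-ρ)) hδ
    (hasDerivAt_comp_add_smul_of_forall_hasDerivAt_zero (f' := fun x => F x (-ρ)) (hH · (-ρ)) u)
    hbound
  simp only [zero_smul, smul_neg, ← sub_eq_add_neg, sub_zero] at hline
  linarith

theorem sq_norm_newtonStep_le_potential_sub {X : Type*} [NormedAddCommGroup X]
    [NormedSpace ℝ X] {F : X → StrongDual ℝ X} {F' : X → X ≃L[ℝ] StrongDual ℝ X} {H : X → ℝ}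
    {L α : ℝ} (hL : 0 < L) (hα : 0 ≤ α)
    (hLip : ∀ u v w : X, |F u w - F v w| ≤ L * ‖u - v‖ * ‖w‖)
    (hcoercive : ∀ u v : X, α * ‖v‖ ^ 2 ≤ F' u v v)
    (hH : ∀ u v : X, HasDerivAt (fun t : ℝ => H (u + t • v)) (F u v) 0) (u : X) :
    L / 2 * ‖u - (u - (α / L) • (F' u).symm (F u))‖ ^ 2 ≤
      H u - H (u - (α / L) • (F' u).symm (F u)) := by
  set ρ := (F' u).symm (F u)
  have hδ : 0 ≤ α / L := div_nonneg hα hL.le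
  have hdescent : α * ‖ρ‖ ^ 2 ≤ F u ρ := by
    simpa only [ρ, ContinuousLinearEquiv.apply_symm_apply] using hcoercive u ρ
  calc L / 2 * ‖u - (u - (α / L) • ρ)‖ ^ 2
      = (α * (α / L) - L / 2 * (α / L) ^ 2) * ‖ρ‖ ^ 2 := by
        rw [sub_sub_cancel, norm_smul, Real.norm_of_nonneg hδ]
        field_simp
        ring
    _ ≤ H u - H (u - (α / L) • ρ) := mul_sq_norm_le_potential_sub hLip hH hdescent hδ

theorem adaptive_dampedNewton_loop_terminates_general
    {X : Type*} [NormedAddCommGroup X] [InnerProductSpace ℝ X]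
    (F : X → StrongDual ℝ X) (F' : X → X ≃L[ℝ] StrongDual ℝ X)
    (H : X → ℝ) (L αF' : ℝ) (hL : 0 < L) (hαF' : 0 < αF')
    -- Lipschitz continuity
    (hLip : ∀ u v w : X, |F u w - F v w| ≤ L * ‖u - v‖ * ‖w‖)
    -- Gateaux differentiability and uniform coercivity of the derivative
    (hcoercive : ∀ u v : X, αF' * ‖v‖ ^ 2 ≤ F' u v v)
    -- H is a Gateaux differentiable potential of F
    (hH : ∀ u v : X, HasDerivAt (fun t : ℝ => H (u + t • v)) (F u v) 0)
    (θ σ : ℝ) (hθ : θ ∈ Set.Ioc (0:ℝ) (1/2)) (hσ : σ ∈ Set.Ioo (0:ℝ) 1) :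
    ∀ u : X,
      (L / 2) * ‖u - (u - (αF' / L) • (F' u).symm (F u))‖ ^ 2 ≤
        H u - H (u - (αF' / L) • (F' u).symm (F u)) ∧
      θ * min αF' L * ‖u - (u - (αF' / L) • (F' u).symm (F u))‖ ^ 2 ≤
        (L / 2) * ‖u - (u - (αF' / L) • (F' u).symm (F u))‖ ^ 2 ∧
      ∃ k : ℕ,
        θ * min αF' L * ‖u - (u - max (σ ^ k) (αF' / L) • (F' u).symm (F u))‖ ^ 2 ≤
          H u - H (u - max (σ ^ k) (αF' / L) • (F' u).symm (F u)) := by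
  intro u
  have hdecrease :=
    sq_norm_newtonStep_le_potential_sub hL hαF'.le hLip hcoercive hH u
  have hconst : θ * min αF' L ≤ L / 2 := by
    have := mul_le_mul hθ.2 (min_le_right αF' L) (lt_min hαF' hL).le (by norm_num)
    linarith
  have hcriterion := mul_le_mul_of_nonneg_right hconst
    (sq_nonneg ‖u - (u - (αF' / L) • (F' u).symm (F u))‖)
  refine ⟨hdecrease, hcriterion, ?_⟩
  obtain ⟨k, hk⟩ := exists_pow_lt_of_lt_one (div_pos hαF' hL) hσ.2
  exact ⟨k, by rw [max_eq_right hk.le]; exact hcriterion.trans hdecrease⟩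

/-- The acceptance criterion of the adaptive damped Newton method
holds for the step size `δ = α_{F'}/L`:
`H(u) − H(u⁺) ≥ (L/2)‖u − u⁺‖² ≥ θ min{α_{F'}, L}‖u − u⁺‖²`; in particular the
repeat-loop (shrinking `δ` from 1 by factors `σ`, capped below by `α_{F'}/L`)
terminates after finitely many reductions. -/
theorem adaptive_dampedNewton_loop_terminates
    {X : Type*} [NormedAddCommGroup X] [InnerProductSpace ℝ X] [CompleteSpace X]
    (F : X → StrongDual ℝ X) (F' : X → X ≃L[ℝ] StrongDual ℝ X)
    (H : X → ℝ) (L αF' : ℝ) (hL : 0 < L) (hαF' : 0 < αF') (hαL : αF' / L ≤ 1)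
    -- Lipschitz continuity
    (hLip : ∀ u v w : X, |F u w - F v w| ≤ L * ‖u - v‖ * ‖w‖)
    -- Gateaux differentiability and uniform coercivity of the derivative
    (hGateaux : ∀ u v : X, HasDerivAt (fun t : ℝ => F (u + t • v)) (F' u v) 0)
    (hcoercive : ∀ u v : X, αF' * ‖v‖ ^ 2 ≤ F' u v v)
    -- H is a Gateaux differentiable potential of F
    (hH : ∀ u v : X, HasDerivAt (fun t : ℝ => H (u + t • v)) (F u v) 0)
    (θ σ : ℝ) (hθ : θ ∈ Set.Ioc (0:ℝ) (1/2)) (hσ : σ ∈ Set.Ioo (0:ℝ) 1) :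
    ∀ u : X,
      (L / 2) * ‖u - (u - (αF' / L) • (F' u).symm (F u))‖ ^ 2 ≤
        H u - H (u - (αF' / L) • (F' u).symm (F u)) ∧
      θ * min αF' L * ‖u - (u - (αF' / L) • (F' u).symm (F u))‖ ^ 2 ≤
        (L / 2) * ‖u - (u - (αF' / L) • (F' u).symm (F u))‖ ^ 2 ∧
      ∃ k : ℕ,
        θ * min αF' L * ‖u - (u - max (σ ^ k) (αF' / L) • (F' u).symm (F u))‖ ^ 2 ≤
          H u - H (u - max (σ ^ k) (αF' / L) • (F' u).symm (F u)) :=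
  adaptive_dampedNewton_loop_terminates_general F F' H L αF' hL hαF' hLip hcoercive hH θ σ hθ hσ
end

section
/- Let d ≥ 1 and let μ : [0,∞) → [0,∞) satisfy the condition (M2): there exist constants 0 < m_μ < M_μ < ∞ with m_μ(t − s) ≤ μ(t²)t − μ(s²)s ≤ M_μ(t − s) for all t ≥ s ≥ 0. Define a : ℝ^d → ℝ^d by a(x) = μ(|x|²)x. Then for all x, y ∈ ℝ^d: (a(x) − a(y)) · (x − y) ≥ m_μ |x − y|² and |a(x) − a(y)| ≤ 3 M_μ |x − y|. -/
/-!
Write `r = ‖x‖`, `s = ‖y‖`, `φ t = μ (t²) t`, `α = μ (r²)`, `β = μ (s²)`. Condition (M2) at `s = 0`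
gives `m ≤ μ (t²) ≤ M` for `t > 0`, and (M2) itself says that `φ` is strongly monotone and
Lipschitz on `[0, ∞)`.

Monotonicity: `⟪α x - β y, x - y⟫ = (φ r - φ s)(r - s) + (α + β)(r s - ⟪x, y⟫)`, while
`‖x - y‖² = (r - s)² + 2 (r s - ⟪x, y⟫)`; compare the two terms separately.

Lipschitz bound: `α x - β y = α (x - y) + (α - β) y`, and `(α - β) s = (φ r - φ s) - α (r - s)`
has absolute value at most `2 M |r - s| ≤ 2 M ‖x - y‖`.
-/

open scoped RealInnerProductSpace

def DiffusionCoeffBounds (μ : ℝ → ℝ) (m M : ℝ) : Prop :=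
  ∀ s t : ℝ, 0 ≤ s → s ≤ t →
    m * (t - s) ≤ μ (t ^ 2) * t - μ (s ^ 2) * s ∧ μ (t ^ 2) * t - μ (s ^ 2) * s ≤ M * (t - s)

section Radial

variable {E : Type*}

theorem inner_smul_sub_smul_sub_eq [NormedAddCommGroup E] [InnerProductSpace ℝ E]
    (α β : ℝ) (x y : E) :
    ⟪α • x - β • y, x - y⟫ = (α * ‖x‖ - β * ‖y‖) * (‖x‖ - ‖y‖)
      + (α + β) * (‖x‖ * ‖y‖ - ⟪x, y⟫) := by
  simp only [inner_sub_left, inner_sub_right, real_inner_smul_left, real_inner_self_eq_norm_sq,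
    real_inner_comm x y]
  ring

theorem mul_le_mul_norm_mul_norm_sub_inner [NormedAddCommGroup E] [InnerProductSpace ℝ E]
    {m α : ℝ} {x : E} (hα : m * ‖x‖ ≤ α * ‖x‖) (y : E) :
    m * (‖x‖ * ‖y‖ - ⟪x, y⟫) ≤ α * (‖x‖ * ‖y‖ - ⟪x, y⟫) := by
  rcases eq_or_ne x 0 with rfl | hx
  · simp
  · exact mul_le_mul_of_nonneg_right (le_of_mul_le_mul_right hα (norm_pos_iff.2 hx))
      (sub_nonneg.2 (real_inner_le_norm x y))

theorem mul_norm_sub_sq_le_inner_smul_sub_smul [NormedAddCommGroup E] [InnerProductSpace ℝ E]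
    {m α β : ℝ} {x y : E} (hα : m * ‖x‖ ≤ α * ‖x‖) (hβ : m * ‖y‖ ≤ β * ‖y‖)
    (hφ : m * (‖x‖ - ‖y‖) ^ 2 ≤ (α * ‖x‖ - β * ‖y‖) * (‖x‖ - ‖y‖)) :
    m * ‖x - y‖ ^ 2 ≤ ⟪α • x - β • y, x - y⟫ := by
  have hnorm : ‖x - y‖ ^ 2 = (‖x‖ - ‖y‖) ^ 2 + 2 * (‖x‖ * ‖y‖ - ⟪x, y⟫) := by
    rw [norm_sub_sq_real]; ring
  have hx := mul_le_mul_norm_mul_norm_sub_inner hα y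
  have hy := mul_le_mul_norm_mul_norm_sub_inner hβ x
  rw [real_inner_comm, mul_comm ‖y‖] at hy
  rw [inner_smul_sub_smul_sub_eq, hnorm]
  linarith

theorem norm_smul_sub_smul_le [SeminormedAddCommGroup E] [NormedSpace ℝ E]
    {M α β : ℝ} {x y : E} (hα₀ : 0 ≤ α) (hαM : α ≤ M)
    (hφ : |α * ‖x‖ - β * ‖y‖| ≤ M * |‖x‖ - ‖y‖|) :
    ‖α • x - β • y‖ ≤ 3 * M * ‖x - y‖ := by
  have hnorms : |‖x‖ - ‖y‖| ≤ ‖x - y‖ := abs_norm_sub_norm_le x y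
  have hcoeff : |(α - β) * ‖y‖| ≤ 2 * M * ‖x - y‖ := by
    have hsplit : (α - β) * ‖y‖ = (α * ‖x‖ - β * ‖y‖) - α * (‖x‖ - ‖y‖) := by ring
    calc |(α - β) * ‖y‖| ≤ |α * ‖x‖ - β * ‖y‖| + |α * (‖x‖ - ‖y‖)| := hsplit ▸ abs_sub _ _
      _ = |α * ‖x‖ - β * ‖y‖| + α * |‖x‖ - ‖y‖| := by rw [abs_mul, abs_of_nonneg hα₀]
      _ ≤ M * |‖x‖ - ‖y‖| + M * |‖x‖ - ‖y‖| := by gcongr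
      _ ≤ 2 * M * ‖x - y‖ := by nlinarith [abs_nonneg (‖x‖ - ‖y‖), hα₀.trans hαM]
  calc ‖α • x - β • y‖ = ‖α • (x - y) + (α - β) • y‖ := by congr 1; module
    _ ≤ α * ‖x - y‖ + |(α - β) * ‖y‖| := by
        grw [norm_add_le, norm_smul, norm_smul, Real.norm_of_nonneg hα₀, Real.norm_eq_abs,
          abs_mul, abs_norm]
    _ ≤ M * ‖x - y‖ + 2 * M * ‖x - y‖ := by gcongr
    _ = 3 * M * ‖x - y‖ := by ring

end Radial

namespace DiffusionCoeffBounds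

variable {μ : ℝ → ℝ} {m M : ℝ} {E : Type*}

theorem mul_le_coeff_mul (hμ : DiffusionCoeffBounds μ m M) {t : ℝ} (ht : 0 ≤ t) :
    m * t ≤ μ (t ^ 2) * t := by
  simpa using (hμ 0 t le_rfl ht).1

theorem coeff_le (hμ : DiffusionCoeffBounds μ m M) {t : ℝ} (ht : 0 < t) : μ (t ^ 2) ≤ M :=
  le_of_mul_le_mul_right (by simpa using (hμ 0 t le_rfl ht.le).2) ht

theorem le_coeff (hμ : DiffusionCoeffBounds μ m M) {t : ℝ} (ht : 0 < t) : m ≤ μ (t ^ 2) :=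
  le_of_mul_le_mul_right (hμ.mul_le_coeff_mul ht.le) ht

theorem mul_sq_le (hμ : DiffusionCoeffBounds μ m M) {r s : ℝ} (hr : 0 ≤ r) (hs : 0 ≤ s) :
    m * (r - s) ^ 2 ≤ (μ (r ^ 2) * r - μ (s ^ 2) * s) * (r - s) := by
  rcases le_total s r with hsr | hrs
  · have := mul_le_mul_of_nonneg_right (hμ s r hs hsr).1 (sub_nonneg.2 hsr)
    linarith
  · have := mul_le_mul_of_nonneg_right (hμ r s hr hrs).1 (sub_nonneg.2 hrs)
    linarith

theorem abs_sub_le (hμ : DiffusionCoeffBounds μ m M) (hm : 0 ≤ m) {r s : ℝ} (hr : 0 ≤ r)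
    (hs : 0 ≤ s) : |μ (r ^ 2) * r - μ (s ^ 2) * s| ≤ M * |r - s| := by
  wlog hsr : s ≤ r generalizing r s
  · rw [abs_sub_comm, abs_sub_comm r]
    exact this hs hr (le_of_not_ge hsr)
  obtain ⟨hlow, hup⟩ := hμ s r hs hsr
  rw [abs_of_nonneg (sub_nonneg.2 hsr), abs_le]
  constructor <;> nlinarith

theorem mul_norm_sub_sq_le_inner [NormedAddCommGroup E] [InnerProductSpace ℝ E]
    (hμ : DiffusionCoeffBounds μ m M) (x y : E) :
    m * ‖x - y‖ ^ 2 ≤ ⟪μ (‖x‖ ^ 2) • x - μ (‖y‖ ^ 2) • y, x - y⟫ :=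
  mul_norm_sub_sq_le_inner_smul_sub_smul (hμ.mul_le_coeff_mul (norm_nonneg x))
    (hμ.mul_le_coeff_mul (norm_nonneg y)) (hμ.mul_sq_le (norm_nonneg x) (norm_nonneg y))

theorem norm_sub_le [NormedAddCommGroup E] [NormedSpace ℝ E]
    (hμ : DiffusionCoeffBounds μ m M) (hm : 0 ≤ m) (x y : E) :
    ‖μ (‖x‖ ^ 2) • x - μ (‖y‖ ^ 2) • y‖ ≤ 3 * M * ‖x - y‖ := by
  wlog hx : x ≠ 0 generalizing x y
  · obtain rfl := not_not.1 hx
    rcases eq_or_ne y 0 with rfl | hy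
    · simp
    · rw [norm_sub_rev, norm_sub_rev 0]
      exact this y 0 hy
  have hr : 0 < ‖x‖ := norm_pos_iff.2 hx
  exact norm_smul_sub_smul_le (hm.trans (hμ.le_coeff hr)) (hμ.coeff_le hr)
    (hμ.abs_sub_le hm (norm_nonneg x) (norm_nonneg y))

end DiffusionCoeffBounds

theorem diffusion_field_monotone_lipschitz_general
    (d : ℕ) (μ : ℝ → ℝ)
    (mμ Mμ : ℝ) (hm : 0 < mμ)
    -- (M2)
    (hM2 : ∀ s t : ℝ, 0 ≤ s → s ≤ t →
      mμ * (t - s) ≤ μ (t ^ 2) * t - μ (s ^ 2) * s ∧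
      μ (t ^ 2) * t - μ (s ^ 2) * s ≤ Mμ * (t - s))
    (a : EuclideanSpace ℝ (Fin d) → EuclideanSpace ℝ (Fin d))
    (ha : ∀ x : EuclideanSpace ℝ (Fin d), a x = μ (‖x‖ ^ 2) • x) :
    ∀ x y : EuclideanSpace ℝ (Fin d),
      mμ * ‖x - y‖ ^ 2 ≤ inner ℝ (a x - a y) (x - y) ∧
      ‖a x - a y‖ ≤ 3 * Mμ * ‖x - y‖ := by
  intro x y
  rw [ha x, ha y]
  exact ⟨DiffusionCoeffBounds.mul_norm_sub_sq_le_inner hM2 x y,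
    DiffusionCoeffBounds.norm_sub_le hM2 hm.le x y⟩

/-- Under (M2), the vector field `a(x) = μ(|x|²)x` on `ℝ^d` is
strongly monotone with constant `m_μ` and Lipschitz with constant `3M_μ`. -/
theorem diffusion_field_monotone_lipschitz
    (d : ℕ) (hd : 1 ≤ d) (μ : ℝ → ℝ) (hμnonneg : ∀ t : ℝ, 0 ≤ t → 0 ≤ μ t)
    (mμ Mμ : ℝ) (hm : 0 < mμ) (hmM : mμ < Mμ)
    -- (M2)
    (hM2 : ∀ s t : ℝ, 0 ≤ s → s ≤ t →
      mμ * (t - s) ≤ μ (t ^ 2) * t - μ (s ^ 2) * s ∧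
      μ (t ^ 2) * t - μ (s ^ 2) * s ≤ Mμ * (t - s))
    (a : EuclideanSpace ℝ (Fin d) → EuclideanSpace ℝ (Fin d))
    (ha : ∀ x : EuclideanSpace ℝ (Fin d), a x = μ (‖x‖ ^ 2) • x) :
    ∀ x y : EuclideanSpace ℝ (Fin d),
      mμ * ‖x - y‖ ^ 2 ≤ inner ℝ (a x - a y) (x - y) ∧
      ‖a x - a y‖ ≤ 3 * Mμ * ‖x - y‖ :=
  diffusion_field_monotone_lipschitz_general d μ mμ Mμ hm hM2 a ha
end

section
/- Let d ≥ 1 and let μ : [0,∞) → [0,∞) be continuously differentiable with μ'(t) ≤ 0 for all t ≥ 0 (condition (M1)), and satisfy (M2) with constants 0 < m_μ < M_μ < ∞, i.e., m_μ(t − s) ≤ μ(t²)t − μ(s²)s ≤ M_μ(t − s) for all t ≥ s ≥ 0. Then for all x, v, w ∈ ℝ^d: (i) μ(|x|²)|v|² + 2μ'(|x|²)(x·v)² ≥ m_μ |v|², and (ii) |μ(|x|²)(v·w) + 2μ'(|x|²)(x·v)(x·w)| ≤ (2M_μ − m_μ)|v||w|. -/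
/-!
Write `g(t) = μ(t²) t`. Condition (M2) says that `g - m_μ t` and `M_μ t - g` are monotone on
`[0, ∞)`, so `g'(t) = μ(t²) + 2μ'(t²) t²` lies in `[m_μ, M_μ]`; together with `μ' ≤ 0` and
Cauchy–Schwarz, `(x·v)² ≤ |x|²|v|²`, this is coercivity. For boundedness, Cauchy–Schwarz bounds
the form by `(μ(|x|²) - 2μ'(|x|²)|x|²)|v||w| = (2μ(|x|²) - g'(|x|))|v||w|`, and `μ(t²) ≤ M_μ`
is (M2) with `s = 0`.
-/

open Set Filter

lemma accPt_principal_Ici {a t : ℝ} (ht : a ≤ t) : AccPt t (𝓟 (Ici a)) := by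
  rw [accPt_principal_iff_nhdsWithin]
  exact (nhdsGT_neBot t).mono
    (nhdsWithin_mono _ fun y hy => ⟨ht.trans hy.out.le, hy.out.ne'⟩)

lemma HasDerivWithinAt.mem_Icc_of_monotoneOn_sub {D : Set ℝ} {g : ℝ → ℝ} {g' m M t : ℝ}
    (ht : AccPt t (𝓟 D)) (hg : HasDerivWithinAt g g' D t)
    (hm : MonotoneOn (fun s => g s - m * s) D) (hM : MonotoneOn (fun s => M * s - g s) D) :
    g' ∈ Icc m M := by
  have hid := hasDerivWithinAt_id t D
  have hlow := (hg.sub (hid.const_mul m)).nonneg_of_monotoneOn ht hm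
  have hhigh := ((hid.const_mul M).sub hg).nonneg_of_monotoneOn ht hM
  simp only [mul_one] at hlow hhigh
  constructor <;> linarith

lemma hasDerivWithinAt_comp_sq_mul_self {μ μ' : ℝ → ℝ}
    (hdiff : ∀ t ∈ Ici (0 : ℝ), HasDerivWithinAt μ (μ' t) (Ici 0) t) (t : ℝ) :
    HasDerivWithinAt (fun s => μ (s ^ 2) * s) (μ (t ^ 2) + 2 * μ' (t ^ 2) * t ^ 2) (Ici 0) t := by
  have hsq : HasDerivWithinAt (fun s : ℝ => s ^ 2) (2 * t) (Ici 0) t := by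
    simpa using (hasDerivAt_pow 2 t).hasDerivWithinAt
  have hcomp := HasDerivWithinAt.comp (h := fun s : ℝ => s ^ 2) (h₂ := μ) t
    (hdiff (t ^ 2) (sq_nonneg t)) hsq fun y _ => sq_nonneg y
  exact (hcomp.mul (hasDerivWithinAt_id t (Ici 0))).congr_deriv
    (by simp only [id, Function.comp_apply]; ring)

section M2

variable {μ : ℝ → ℝ} {mμ Mμ : ℝ}
  (hM2 : ∀ s t : ℝ, 0 ≤ s → s ≤ t →
    mμ * (t - s) ≤ μ (t ^ 2) * t - μ (s ^ 2) * s ∧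
    μ (t ^ 2) * t - μ (s ^ 2) * s ≤ Mμ * (t - s))
include hM2

lemma monotoneOn_comp_sq_mul_self_sub :
    MonotoneOn (fun s => μ (s ^ 2) * s - mμ * s) (Ici 0) := fun s hs t _ hst => by
  linarith [(hM2 s t hs hst).1]

lemma monotoneOn_sub_comp_sq_mul_self :
    MonotoneOn (fun s => Mμ * s - μ (s ^ 2) * s) (Ici 0) := fun s hs t _ hst => by
  linarith [(hM2 s t hs hst).2]

lemma apply_sq_add_two_mul_deriv_mul_sq_mem_Icc {μ' : ℝ → ℝ}
    (hdiff : ∀ t ∈ Ici (0 : ℝ), HasDerivWithinAt μ (μ' t) (Ici 0) t) {t : ℝ} (ht : 0 ≤ t) :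
    μ (t ^ 2) + 2 * μ' (t ^ 2) * t ^ 2 ∈ Icc mμ Mμ :=
  (hasDerivWithinAt_comp_sq_mul_self hdiff t).mem_Icc_of_monotoneOn_sub (accPt_principal_Ici ht)
    (monotoneOn_comp_sq_mul_self_sub hM2) (monotoneOn_sub_comp_sq_mul_self hM2)

lemma apply_sq_le {μ' : ℝ → ℝ}
    (hdiff : ∀ t ∈ Ici (0 : ℝ), HasDerivWithinAt μ (μ' t) (Ici 0) t) {t : ℝ} (ht : 0 ≤ t) :
    μ (t ^ 2) ≤ Mμ := by
  rcases ht.eq_or_lt with rfl | ht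
  · simpa using (apply_sq_add_two_mul_deriv_mul_sq_mem_Icc hM2 hdiff le_rfl).2
  · have h := (hM2 0 t le_rfl ht.le).2
    simp only [mul_zero, sub_zero] at h
    exact le_of_mul_le_mul_right h ht

end M2

section InnerProduct

variable {E : Type*} [NormedAddCommGroup E] [InnerProductSpace ℝ E]

lemma le_mul_sq_add_mul_inner_sq {a b m : ℝ} (hb : b ≤ 0) (x v : E)
    (h : m ≤ a + 2 * b * ‖x‖ ^ 2) :
    m * ‖v‖ ^ 2 ≤ a * ‖v‖ ^ 2 + 2 * b * inner ℝ x v ^ 2 := by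
  have hcs : inner ℝ x v ^ 2 ≤ ‖x‖ ^ 2 * ‖v‖ ^ 2 := by
    rw [← mul_pow, ← sq_abs]
    exact pow_le_pow_left₀ (abs_nonneg _) (abs_real_inner_le_norm x v) 2
  nlinarith [mul_le_mul_of_nonneg_right h (sq_nonneg ‖v‖)]

lemma abs_mul_inner_add_mul_inner_mul_inner_le {a b : ℝ} (ha : 0 ≤ a) (hb : b ≤ 0) (x v w : E) :
    |a * inner ℝ v w + 2 * b * inner ℝ x v * inner ℝ x w| ≤
      (a - 2 * b * ‖x‖ ^ 2) * ‖v‖ * ‖w‖ := by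
  have hxv := abs_real_inner_le_norm x v
  have hxw := abs_real_inner_le_norm x w
  calc |a * inner ℝ v w + 2 * b * inner ℝ x v * inner ℝ x w|
      ≤ a * |inner ℝ v w| + (-2 * b) * (|inner ℝ x v| * |inner ℝ x w|) := by
        refine (abs_add_le _ _).trans_eq ?_
        rw [abs_mul, abs_of_nonneg ha, abs_mul, abs_mul, abs_mul, abs_of_nonpos hb, abs_two]
        ring
    _ ≤ a * (‖v‖ * ‖w‖) + (-2 * b) * ((‖x‖ * ‖v‖) * (‖x‖ * ‖w‖)) := by
        have : 0 ≤ -2 * b := by linarith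
        gcongr
        exact abs_real_inner_le_norm v w
    _ = (a - 2 * b * ‖x‖ ^ 2) * ‖v‖ * ‖w‖ := by ring

end InnerProduct

theorem diffusion_jacobian_coercive_bounded_general
    (d : ℕ) (μ μ' : ℝ → ℝ) (hμnonneg : ∀ t : ℝ, 0 ≤ t → 0 ≤ μ t)
    -- (M1): μ continuously differentiable on [0,∞) with μ' ≤ 0
    (hdiff : ∀ t ∈ Set.Ici (0:ℝ), HasDerivWithinAt μ (μ' t) (Set.Ici 0) t)
    (hdec : ∀ t : ℝ, 0 ≤ t → μ' t ≤ 0)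
    (mμ Mμ : ℝ)
    -- (M2)
    (hM2 : ∀ s t : ℝ, 0 ≤ s → s ≤ t →
      mμ * (t - s) ≤ μ (t ^ 2) * t - μ (s ^ 2) * s ∧
      μ (t ^ 2) * t - μ (s ^ 2) * s ≤ Mμ * (t - s)) :
    ∀ x v w : EuclideanSpace ℝ (Fin d),
      mμ * ‖v‖ ^ 2 ≤
        μ (‖x‖ ^ 2) * ‖v‖ ^ 2 + 2 * μ' (‖x‖ ^ 2) * (inner ℝ x v : ℝ) ^ 2 ∧
      |μ (‖x‖ ^ 2) * (inner ℝ v w : ℝ) +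
          2 * μ' (‖x‖ ^ 2) * (inner ℝ x v : ℝ) * (inner ℝ x w : ℝ)| ≤
        (2 * Mμ - mμ) * ‖v‖ * ‖w‖ := by
  intro x v w
  have hx := norm_nonneg x
  obtain ⟨hlow, -⟩ := apply_sq_add_two_mul_deriv_mul_sq_mem_Icc hM2 hdiff hx
  have hμM := apply_sq_le hM2 hdiff hx
  have hb := hdec _ (sq_nonneg ‖x‖)
  refine ⟨le_mul_sq_add_mul_inner_sq hb x v hlow, ?_⟩
  refine (abs_mul_inner_add_mul_inner_mul_inner_le (hμnonneg _ (sq_nonneg _)) hb x v w).trans ?_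
  gcongr ?_ * _ * _
  linarith

/-- Under (M1) and (M2), the pointwise Jacobian bilinear form
`(v,w) ↦ μ(|x|²)(v·w) + 2μ'(|x|²)(x·v)(x·w)` of `x ↦ μ(|x|²)x` is coercive with
constant `m_μ` and bounded with constant `2M_μ − m_μ`. -/
theorem diffusion_jacobian_coercive_bounded
    (d : ℕ) (hd : 1 ≤ d) (μ μ' : ℝ → ℝ) (hμnonneg : ∀ t : ℝ, 0 ≤ t → 0 ≤ μ t)
    -- (M1): μ continuously differentiable on [0,∞) with μ' ≤ 0
    (hdiff : ∀ t ∈ Set.Ici (0:ℝ), HasDerivWithinAt μ (μ' t) (Set.Ici 0) t)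
    (hcont : ContinuousOn μ' (Set.Ici 0))
    (hdec : ∀ t : ℝ, 0 ≤ t → μ' t ≤ 0)
    (mμ Mμ : ℝ) (hm : 0 < mμ) (hmM : mμ < Mμ)
    -- (M2)
    (hM2 : ∀ s t : ℝ, 0 ≤ s → s ≤ t →
      mμ * (t - s) ≤ μ (t ^ 2) * t - μ (s ^ 2) * s ∧
      μ (t ^ 2) * t - μ (s ^ 2) * s ≤ Mμ * (t - s)) :
    ∀ x v w : EuclideanSpace ℝ (Fin d),
      mμ * ‖v‖ ^ 2 ≤
        μ (‖x‖ ^ 2) * ‖v‖ ^ 2 + 2 * μ' (‖x‖ ^ 2) * (inner ℝ x v : ℝ) ^ 2 ∧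
      |μ (‖x‖ ^ 2) * (inner ℝ v w : ℝ) +
          2 * μ' (‖x‖ ^ 2) * (inner ℝ x v : ℝ) * (inner ℝ x w : ℝ)| ≤
        (2 * Mμ - mμ) * ‖v‖ * ‖w‖ :=
  diffusion_jacobian_coercive_bounded_general d μ μ' hμnonneg hdiff hdec mμ Mμ hM2
end

section
/- Let γ, ζ, k > 0 and define the Bercovier–Engelman regularised diffusion coefficient μ : [0,∞) → (0,∞) by μ(t) = γ/√(t + k^{-2}) + 2ζ. Then μ is continuously differentiable and monotonically decreasing (condition (M1)), and satisfies condition (M2) with constants m_μ = 2ζ and M_μ = 2ζ + kγ; that is, 2ζ(t − s) ≤ μ(t²)t − μ(s²)s ≤ (2ζ + kγ)(t − s) for all real t ≥ s ≥ 0. -/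
/-!
On `[0, ∞)` the coefficient is a positive constant plus a decreasing reciprocal square root,
which gives (M1). For (M2), write `c = k⁻²`; then `μ(t²) t = γ φ(t) + 2ζ t` with
`φ(t) = t / √(t² + c)`. The lower bound is the monotonicity of `φ`, the upper bound the estimate
`φ(t) - φ(s) ≤ (t - s) / √c = k (t - s)`: the denominator only grows with `t`, and it is at
least `√c`.
-/

open Real Set

section
variable {c : ℝ}

theorem contDiffOn_div_sqrt_add_const (hc : 0 < c) (γ d : ℝ) {n : WithTop ℕ∞} :
    ContDiffOn ℝ n (fun x => γ / √(x + c) + d) (Ici 0) := by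
  have hpos : ∀ x ∈ Ici (0 : ℝ), 0 < x + c := fun x hx => by linarith [mem_Ici.mp hx]
  have hsqrt : ContDiffOn ℝ n (fun x => √(x + c)) (Ici 0) :=
    (contDiffOn_id.add contDiffOn_const).sqrt fun x hx => (hpos x hx).ne'
  exact (contDiffOn_const.div hsqrt fun x hx => (sqrt_pos.mpr (hpos x hx)).ne').add
    contDiffOn_const

theorem antitoneOn_div_sqrt_add_const (hc : 0 < c) {γ : ℝ} (hγ : 0 ≤ γ) (d : ℝ) :
    AntitoneOn (fun x => γ / √(x + c) + d) (Ici 0) := by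
  intro x (hx : 0 ≤ x) y _ hxy
  have hx' : 0 < √(x + c) := sqrt_pos.mpr (by linarith)
  dsimp only
  gcongr

theorem monotoneOn_div_sqrt_sq_add (hc : 0 < c) :
    MonotoneOn (fun x => x / √(x ^ 2 + c)) (Ici 0) := by
  intro s (hs : 0 ≤ s) t (ht : 0 ≤ t) hst
  have hA : 0 < √(t ^ 2 + c) := sqrt_pos.mpr (by positivity)
  have hB : 0 < √(s ^ 2 + c) := sqrt_pos.mpr (by positivity)
  -- both sides are square roots, and `s² (t² + c) ≤ t² (s² + c)` reduces to `s² ≤ t²`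
  have hkey : s * √(t ^ 2 + c) ≤ t * √(s ^ 2 + c) := by
    have : s ^ 2 ≤ t ^ 2 := pow_le_pow_left₀ hs hst 2
    have := sqrt_le_sqrt (show s ^ 2 * (t ^ 2 + c) ≤ t ^ 2 * (s ^ 2 + c) by nlinarith)
    rwa [sqrt_mul (sq_nonneg s), sqrt_mul (sq_nonneg t), sqrt_sq hs, sqrt_sq ht] at this
  exact (div_le_div_iff₀ hB hA).mpr hkey

theorem div_sqrt_sq_add_sub_le (hc : 0 < c) {s t : ℝ} (hs : 0 ≤ s) (hst : s ≤ t) :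
    t / √(t ^ 2 + c) - s / √(s ^ 2 + c) ≤ (t - s) / √c := by
  have hBA : √(s ^ 2 + c) ≤ √(t ^ 2 + c) := sqrt_le_sqrt (by nlinarith)
  have hcA : √c ≤ √(t ^ 2 + c) := sqrt_le_sqrt (by nlinarith)
  calc t / √(t ^ 2 + c) - s / √(s ^ 2 + c)
      ≤ t / √(t ^ 2 + c) - s / √(t ^ 2 + c) := by gcongr
    _ = (t - s) / √(t ^ 2 + c) := sub_div t s _ |>.symm
    _ ≤ (t - s) / √c := by gcongr

end

/-- The Bercovier–Engelman regularised diffusion coefficient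
`μ(t) = γ/√(t + k⁻²) + 2ζ` (with `γ, ζ, k > 0`) is continuously differentiable,
monotonically decreasing and positive on `[0,∞)` (condition (M1)), and satisfies
(M2) with `m_μ = 2ζ` and `M_μ = 2ζ + kγ`. -/
theorem bercovier_engelman_diffusion_coefficient
    (γ ζ k : ℝ) (hγ : 0 < γ) (hζ : 0 < ζ) (hk : 0 < k)
    (μ : ℝ → ℝ) (hμ : ∀ t : ℝ, μ t = γ / Real.sqrt (t + (k ^ 2)⁻¹) + 2 * ζ) :
    ContDiffOn ℝ 1 μ (Set.Ici 0) ∧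
    AntitoneOn μ (Set.Ici 0) ∧
    (∀ t : ℝ, 0 ≤ t → 0 < μ t) ∧
    (∀ s t : ℝ, 0 ≤ s → s ≤ t →
      2 * ζ * (t - s) ≤ μ (t ^ 2) * t - μ (s ^ 2) * s ∧
      μ (t ^ 2) * t - μ (s ^ 2) * s ≤ (2 * ζ + k * γ) * (t - s)) := by
  have hc : 0 < (k ^ 2)⁻¹ := by positivity
  have hsq : ∀ t, μ (t ^ 2) * t = γ * (t / √(t ^ 2 + (k ^ 2)⁻¹)) + 2 * ζ * t := fun t => by
    rw [hμ]; ring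
  have hk' : ∀ x : ℝ, x / √((k ^ 2)⁻¹) = k * x := fun x => by
    rw [sqrt_inv, sqrt_sq hk.le, div_inv_eq_mul, mul_comm]
  obtain rfl : μ = fun t => γ / √(t + (k ^ 2)⁻¹) + 2 * ζ := funext hμ
  refine ⟨contDiffOn_div_sqrt_add_const hc γ _, antitoneOn_div_sqrt_add_const hc hγ.le _,
    fun t ht => by positivity, fun s t hs hst => ?_⟩
  have hmono := monotoneOn_div_sqrt_sq_add hc hs (hs.trans hst) hst
  have hlip := div_sqrt_sq_add_sub_le hc hs hst
  rw [hk'] at hlip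
  rw [hsq, hsq]
  constructor
  · linarith [mul_le_mul_of_nonneg_left hmono hγ.le]
  · linarith [mul_le_mul_of_nonneg_left hlip hγ.le]
end
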